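/- Let c₂, c₄ ∈ [1,3] and consider the constant data f₁ ≡ 3, f₂ ≡ c₂, f₃ ≡ −1, f₄ ≡ c₄. Then there exists a continuous F : E → ℝ² solving the system AF ≤ f if and only if c₂ > 1 and c₄ ≥ 1 + 1/(c₂ − 1). -/

import Mathlib

open Real Set

/-- The closed unit square `E = [0,1] × [0,1]` in `ℝ²`. -/
def E : Set (ℝ × ℝ) := Set.Icc 0 1 ×ˢ Set.Icc 0 1

/-- `F` solves the system `A F ≤ f` on `E`. -/
def Solves (f1 f2 f3 f4 : ℝ × ℝ → ℝ) (F : ℝ × ℝ → ℝ × ℝ) : Prop :=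
  (∀ x ∈ E, x ≠ ((0 : ℝ), (0 : ℝ)) →
    (x.1 ^ 4 / (x.1 ^ 2 + x.2 ^ 2) ^ 2 * (F x).1 + x.2 ^ 4 / (x.1 ^ 2 + x.2 ^ 2) ^ 2 * (F x).2 ≤ f1 x ∧
     x.2 ^ 4 / (x.1 ^ 2 + x.2 ^ 2) ^ 2 * (F x).1 - x.1 ^ 4 / (x.1 ^ 2 + x.2 ^ 2) ^ 2 * (F x).2 ≤ f2 x ∧
     -(x.1 ^ 4 / (x.1 ^ 2 + x.2 ^ 2) ^ 2) * (F x).1 - x.2 ^ 4 / (x.1 ^ 2 + x.2 ^ 2) ^ 2 * (F x).2 ≤ f3 x ∧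
     -(x.2 ^ 4 / (x.1 ^ 2 + x.2 ^ 2) ^ 2) * (F x).1 + x.1 ^ 4 / (x.1 ^ 2 + x.2 ^ 2) ^ 2 * (F x).2 ≤ f4 x)) ∧
  (0 ≤ f1 (0, 0) ∧ 0 ≤ f2 (0, 0) ∧ 0 ≤ f4 (0, 0) ∧ -(10 : ℝ) ^ 6 * (F (0, 0)).1 ≤ f3 (0, 0))

open Filter Topology in
lemma ray_limit (c2 c4 : ℝ) (F : ℝ × ℝ → ℝ × ℝ) (hF : ContinuousOn F E)
    (hs : Solves (fun _ => (3 : ℝ)) (fun _ => c2) (fun _ => (-1 : ℝ)) (fun _ => c4) F)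
    (α β : ℝ) (hα : 0 ≤ α) (hα1 : α ≤ 1) (hβ : 0 ≤ β) (hβ1 : β ≤ 1)
    (hαβ : α ^ 2 + β ^ 2 = 1) :
    1 ≤ α ^ 4 * (F (0, 0)).1 + β ^ 4 * (F (0, 0)).2 ∧
    β ^ 4 * (F (0, 0)).1 - α ^ 4 * (F (0, 0)).2 ≤ c2 ∧
    -(β ^ 4) * (F (0, 0)).1 + α ^ 4 * (F (0, 0)).2 ≤ c4 := by
  have h0E : ((0 : ℝ), (0 : ℝ)) ∈ E := by
    constructor <;> constructor <;> norm_num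
  set p : ℝ → ℝ × ℝ := fun t => (t * α, t * β) with hp
  have hmem : ∀ t ∈ Ioc (0:ℝ) 1, p t ∈ E ∧ p t ≠ ((0:ℝ),(0:ℝ)) := by
    intro t ht
    obtain ⟨ht0, ht1⟩ := ht
    refine ⟨⟨⟨by positivity, ?_⟩, ⟨by positivity, ?_⟩⟩, ?_⟩
    · exact mul_le_one₀ ht1 hα hα1
    · exact mul_le_one₀ ht1 hβ hβ1
    · intro h
      rw [Prod.mk.injEq] at h
      have hα0 : α = 0 := by
        have := h.1; rcases mul_eq_zero.mp this with h'|h' <;> [linarith; exact h']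
      have hβ0 : β = 0 := by
        have := h.2; rcases mul_eq_zero.mp this with h'|h' <;> [linarith; exact h']
      rw [hα0, hβ0] at hαβ; norm_num at hαβ
  have hIoc : Ioc (0:ℝ) 1 ∈ 𝓝[>] (0:ℝ) := Ioc_mem_nhdsGT_of_mem ⟨le_refl 0, zero_lt_one⟩
  have hptend : Tendsto p (𝓝[>] (0:ℝ)) (𝓝[E] ((0:ℝ),(0:ℝ))) := by
    apply tendsto_nhdsWithin_of_tendsto_nhds_of_eventually_within
    · have : Tendsto p (𝓝 (0:ℝ)) (𝓝 ((0:ℝ),(0:ℝ))) := by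
        have hc : Continuous p := by fun_prop
        have := hc.tendsto 0
        simpa [hp] using this
      exact this.mono_left nhdsWithin_le_nhds
    · filter_upwards [hIoc] with t ht using (hmem t ht).1
  have Fcomp : Tendsto (fun t => F (p t)) (𝓝[>] (0:ℝ)) (𝓝 (F (0,0))) :=
    (hF _ h0E).tendsto.comp hptend
  have F1t : Tendsto (fun t => (F (p t)).1) (𝓝[>] (0:ℝ)) (𝓝 (F (0,0)).1) :=
    (continuous_fst.tendsto _).comp Fcomp
  have F2t : Tendsto (fun t => (F (p t)).2) (𝓝[>] (0:ℝ)) (𝓝 (F (0,0)).2) :=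
    (continuous_snd.tendsto _).comp Fcomp
  -- the coefficient identities along the ray
  have hcoef : ∀ t : ℝ, 0 < t →
      (p t).1 ^ 4 / ((p t).1 ^ 2 + (p t).2 ^ 2) ^ 2 = α ^ 4 ∧
      (p t).2 ^ 4 / ((p t).1 ^ 2 + (p t).2 ^ 2) ^ 2 = β ^ 4 := by
    intro t ht
    have hden : ((p t).1 ^ 2 + (p t).2 ^ 2) ^ 2 = t ^ 4 := by
      have : (p t).1 ^ 2 + (p t).2 ^ 2 = t ^ 2 * (α ^ 2 + β ^ 2) := by simp [hp]; ring
      rw [this, hαβ]; ring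
    have ht4 : (t:ℝ) ^ 4 ≠ 0 := by positivity
    constructor
    · rw [hden, show (p t).1 ^ 4 = t ^ 4 * α ^ 4 by simp [hp]; ring,
        mul_div_assoc]
      field_simp
    · rw [hden, show (p t).2 ^ 4 = t ^ 4 * β ^ 4 by simp [hp]; ring,
        mul_div_assoc]
      field_simp
  have hev : ∀ᶠ t in 𝓝[>] (0:ℝ),
      1 ≤ α ^ 4 * (F (p t)).1 + β ^ 4 * (F (p t)).2 ∧
      β ^ 4 * (F (p t)).1 - α ^ 4 * (F (p t)).2 ≤ c2 ∧
      -(β ^ 4) * (F (p t)).1 + α ^ 4 * (F (p t)).2 ≤ c4 := by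
    filter_upwards [hIoc] with t ht
    obtain ⟨hE, hne⟩ := hmem t ht
    obtain ⟨h1, h2, h3, h4⟩ := hs.1 (p t) hE hne
    obtain ⟨ca, cb⟩ := hcoef t ht.1
    simp only at h1 h2 h3 h4
    rw [ca, cb] at h1 h2 h3 h4
    refine ⟨by linarith, by linarith, by linarith⟩
  refine ⟨ge_of_tendsto ?_ (hev.mono fun t h => h.1),
          le_of_tendsto ?_ (hev.mono fun t h => h.2.1),
          le_of_tendsto ?_ (hev.mono fun t h => h.2.2)⟩
  · exact (F1t.const_mul _).add (F2t.const_mul _)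
  · exact (F1t.const_mul _).sub (F2t.const_mul _)
  · exact (F1t.const_mul _).add (F2t.const_mul _)

set_option maxHeartbeats 1000000 in
theorem stmt_13 (c2 c4 : ℝ) (hc2 : c2 ∈ Set.Icc (1 : ℝ) 3) (hc4 : c4 ∈ Set.Icc (1 : ℝ) 3) :
    (∃ F : ℝ × ℝ → ℝ × ℝ, ContinuousOn F E ∧
        Solves (fun _ => (3 : ℝ)) (fun _ => c2) (fun _ => (-1 : ℝ)) (fun _ => c4) F) ↔
      (1 < c2 ∧ 1 + 1 / (c2 - 1) ≤ c4) := by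
  obtain ⟨hc21, hc23⟩ := hc2
  obtain ⟨hc41, hc43⟩ := hc4
  constructor
  · rintro ⟨F, hF, hs⟩
    set u := (F (0, 0)).1 with hu
    set v := (F (0, 0)).2 with hv
    have hx := ray_limit c2 c4 F hF hs 1 0 (by norm_num) (by norm_num) (by norm_num)
      (by norm_num) (by norm_num)
    have hy := ray_limit c2 c4 F hF hs 0 1 (by norm_num) (by norm_num) (by norm_num)
      (by norm_num) (by norm_num)
    have hu1 : 1 ≤ u := by have := hx.1; rw [← hu, ← hv] at this; linarith
    have hvc4 : v ≤ c4 := by have := hx.2.2; rw [← hu, ← hv] at this; linarith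
    have hv1 : 1 ≤ v := by have := hy.1; rw [← hu, ← hv] at this; linarith
    have huc2 : u ≤ c2 := by have := hy.2.1; rw [← hu, ← hv] at this; linarith
    have hw : (0:ℝ) < u + v := by linarith
    set α : ℝ := Real.sqrt (v / (u + v)) with hαdef
    set β : ℝ := Real.sqrt (u / (u + v)) with hβdef
    have hα2 : α ^ 2 = v / (u + v) := Real.sq_sqrt (by positivity)
    have hβ2 : β ^ 2 = u / (u + v) := Real.sq_sqrt (by positivity)
    have hαβ : α ^ 2 + β ^ 2 = 1 := by
      rw [hα2, hβ2, ← add_div, add_comm, div_self hw.ne']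
    have hα1 : α ≤ 1 := by
      rw [hαdef]
      refine Real.sqrt_le_one.mpr ?_
      rw [div_le_one hw]; linarith
    have hβ1 : β ≤ 1 := by
      rw [hβdef]
      refine Real.sqrt_le_one.mpr ?_
      rw [div_le_one hw]; linarith
    have hd := (ray_limit c2 c4 F hF hs α β (Real.sqrt_nonneg _) hα1
      (Real.sqrt_nonneg _) hβ1 hαβ).1
    rw [← hu, ← hv, show α ^ 4 = (α ^ 2) ^ 2 by ring, show β ^ 4 = (β ^ 2) ^ 2 by ring,
      hα2, hβ2, div_pow, div_pow, div_mul_eq_mul_div, div_mul_eq_mul_div,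
      ← add_div, le_div_iff₀ (by positivity)] at hd
    -- hd : 1 * (u+v)^2 ≤ v^2 * u + u^2 * v
    have huv : u + v ≤ u * v := by nlinarith
    have hkey : 1 ≤ (c2 - 1) * (c4 - 1) := by
      nlinarith [mul_nonneg (by linarith : (0:ℝ) ≤ u - 1) (by linarith : (0:ℝ) ≤ v - 1),
        mul_nonneg (by linarith : (0:ℝ) ≤ c2 - u) (by linarith : (0:ℝ) ≤ v - 1),
        mul_nonneg (by linarith : (0:ℝ) ≤ c4 - v) (by linarith : (0:ℝ) ≤ c2 - 1)]
    have hc2gt : 1 < c2 := by nlinarith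
    refine ⟨hc2gt, ?_⟩
    have h1 : 1 / (c2 - 1) ≤ c4 - 1 := by
      rw [div_le_iff₀ (by linarith)]; nlinarith
    linarith
  · rintro ⟨hc2gt, hc4ge⟩
    have hkey : 1 ≤ (c2 - 1) * (c4 - 1) := by
      have h1 : 1 / (c2 - 1) ≤ c4 - 1 := by linarith
      rw [div_le_iff₀ (by linarith)] at h1
      nlinarith
    refine ⟨fun _ => (c2, c4), continuousOn_const, ?_⟩
    unfold Solves
    refine ⟨?_, by norm_num, by simp only; linarith, by simp only; linarith,
      by simp only; nlinarith⟩
    intro x hxE hxne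
    simp only
    have hx0 : (0:ℝ) < x.1 ^ 2 + x.2 ^ 2 := by
      have : x.1 ≠ 0 ∨ x.2 ≠ 0 := by
        by_contra h
        push_neg at h
        exact hxne (Prod.ext h.1 h.2)
      rcases this with h | h <;> positivity
    have hρ : (0:ℝ) < (x.1 ^ 2 + x.2 ^ 2) ^ 2 := by positivity
    set a : ℝ := x.1 ^ 4 / (x.1 ^ 2 + x.2 ^ 2) ^ 2 with ha
    set b : ℝ := x.2 ^ 4 / (x.1 ^ 2 + x.2 ^ 2) ^ 2 with hb
    have ha0 : 0 ≤ a := by positivity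
    have hb0 : 0 ≤ b := by positivity
    have hab : a + b ≤ 1 := by
      rw [ha, hb, ← add_div, div_le_one hρ]
      nlinarith [sq_nonneg (x.1 * x.2)]
    have hkey2 : 1 ≤ a * c2 + b * c4 := by
      rw [ha, hb, div_mul_eq_mul_div, div_mul_eq_mul_div, ← add_div,
        le_div_iff₀ hρ]
      nlinarith [sq_nonneg ((c2 - 1) * x.1 ^ 2 - x.2 ^ 2), sq_nonneg x.2,
        mul_nonneg (by nlinarith : (0:ℝ) ≤ (c2 - 1) * (c4 - 1) - 1) (sq_nonneg (x.2 ^ 2))]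
    refine ⟨?_, ?_, by linarith, ?_⟩
    · nlinarith [mul_nonneg ha0 (by linarith : (0:ℝ) ≤ 3 - c2),
        mul_nonneg hb0 (by linarith : (0:ℝ) ≤ 3 - c4)]
    · nlinarith [mul_nonneg (by linarith : (0:ℝ) ≤ 1 - b) (by linarith : (0:ℝ) ≤ c2),
        mul_nonneg ha0 (by linarith : (0:ℝ) ≤ c4)]
    · nlinarith [mul_nonneg (by linarith : (0:ℝ) ≤ 1 - a) (by linarith : (0:ℝ) ≤ c4),
        mul_nonneg hb0 (by linarith : (0:ℝ) ≤ c2)]
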